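/- Let n ≥ 1, 1 < p < q < ∞, γ, δ ∈ ℝ with γ + δ > 0, and ζ = n/p - n/q + (γ+δ)/2. Suppose (u₀,v₀) ∈ ℝⁿ × ℝⁿ with √(|u₀|²+|v₀|²) > 3, and Q₁ × Q₂ ⊂ ℝⁿ × ℝⁿ is a product of axis-parallel cubes centered at (u₀,v₀) with vol(Q₂)^{1/n} = 1 and vol(Q₁)^{1/n} = λ ∈ (0,1], so that the diameter of Q₁ × Q₂ is at most, say, 2√(2n). If for all (u,v) ∈ Q₁ × Q₂ one has (1/2)√(|u₀|²+|v₀|²) ≤ √(|u|²+|v|²) ≤ 2√(|u₀|²+|v₀|²), then for any r > 1, vol(Q₁)^{ζ/n - 1/p + 1/q} vol(Q₂)^{ζ/n - 1/p + 1/q} · [(1/(vol Q₁ vol Q₂)) ∫∫_{Q₁×Q₂} (|u|²+|v|²)^{-γqr/2} du dv]^{1/(qr)} · [(1/(vol Q₁ vol Q₂)) ∫∫_{Q₁×Q₂} (|u|²+|v|²)^{-δpr/(2(p-1))} du dv]^{(p-1)/(pr)} ≤ C(p,q,r,γ,δ) · λ^{(γ+δ)/(2n)} with a constant C depending only on p,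 q, r, γ, δ, n. -/

import Mathlib

/-!
On `Q₁ × Q₂` the weight `w = ‖u‖² + ‖v‖²` stays within a factor `4` of `S = ‖u₀‖² + ‖v₀‖² ≥ 9`,
so the average of `w ^ e` is at most `4 ^ |e| * S ^ e`, and the two averaged powers of `S` combine
to `S ^ (-(γ + δ) / 2) ≤ 9 ^ (-(γ + δ) / 2)`. Since `ζ / n - 1 / p + 1 / q = (γ + δ) / (2 n)`, the
volume factors contribute `λ ^ ((γ + δ) / 2) ≤ λ ^ ((γ + δ) / (2 n))`.
-/

open MeasureTheory

/-- Axis-parallel cube in `ℝⁿ` with center `c` and side length `ℓ`. -/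
def cube (n : ℕ) (c : EuclideanSpace ℝ (Fin n)) (ℓ : ℝ) : Set (EuclideanSpace ℝ (Fin n)) :=
  {x | ∀ i, |x i - c i| ≤ ℓ / 2}

lemma cube_eq_preimage (n : ℕ) (c : EuclideanSpace ℝ (Fin n)) (ℓ : ℝ) :
    cube n c ℓ = (MeasurableEquiv.toLp 2 (Fin n → ℝ)).symm ⁻¹'
      (Set.univ.pi fun i => Set.Icc (c i - ℓ / 2) (c i + ℓ / 2)) := by
  ext x
  simp only [cube, Set.mem_ofPred_eq, Set.mem_preimage, Set.mem_univ_pi, Set.mem_Icc,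
    MeasurableEquiv.toLp_symm_apply, abs_le]
  refine forall_congr' fun i => and_congr ?_ ?_ <;> constructor <;> intro h <;> linarith

lemma measurableSet_cube (n : ℕ) (c : EuclideanSpace ℝ (Fin n)) (ℓ : ℝ) :
    MeasurableSet (cube n c ℓ) := by
  rw [cube_eq_preimage]
  exact (MeasurableEquiv.measurable _) (MeasurableSet.univ_pi fun _ => measurableSet_Icc)

lemma volume_cube (n : ℕ) (c : EuclideanSpace ℝ (Fin n)) (ℓ : ℝ) :
    volume (cube n c ℓ) = ENNReal.ofReal ℓ ^ n := by
  rw [cube_eq_preimage,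
    (EuclideanSpace.volume_preserving_symm_measurableEquiv_toLp (Fin n)).measure_preimage
      (MeasurableSet.univ_pi fun _ => measurableSet_Icc).nullMeasurableSet,
    volume_pi_pi]
  simp [Real.volume_Icc, show ∀ a : ℝ, a + ℓ / 2 - (a - ℓ / 2) = ℓ from fun a => by ring]

lemma volume_cube_toReal (n : ℕ) (c : EuclideanSpace ℝ (Fin n)) {ℓ : ℝ} (hℓ : 0 ≤ ℓ) :
    (volume (cube n c ℓ)).toReal = ℓ ^ n := by
  rw [volume_cube, ENNReal.toReal_pow, ENNReal.toReal_ofReal hℓ]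

lemma volume_cube_toReal_rpow_div_natCast {n : ℕ} (hn : n ≠ 0) (c : EuclideanSpace ℝ (Fin n))
    {ℓ : ℝ} (hℓ : 0 ≤ ℓ) (a : ℝ) : (volume (cube n c ℓ)).toReal ^ (a / n) = ℓ ^ a := by
  rw [volume_cube_toReal n c hℓ, ← Real.rpow_natCast, ← Real.rpow_mul hℓ,
    mul_div_cancel₀ a (Nat.cast_ne_zero.2 hn)]

lemma rpow_le_rpow_abs_mul_rpow {a S x : ℝ} (e : ℝ) (ha : 0 < a) (hS : 0 < S)
    (hlow : S / a ≤ x) (hup : x ≤ a * S) : x ^ e ≤ a ^ |e| * S ^ e := by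
  rcases le_or_gt 0 e with he | he
  · calc x ^ e ≤ (a * S) ^ e := Real.rpow_le_rpow ((div_pos hS ha).le.trans hlow) hup he
      _ = a ^ |e| * S ^ e := by rw [abs_of_nonneg he, Real.mul_rpow ha.le hS.le]
  · calc x ^ e ≤ (S / a) ^ e := Real.rpow_le_rpow_of_nonpos (div_pos hS ha) hlow he.le
      _ = a ^ |e| * S ^ e := by
        rw [abs_of_neg he, Real.div_rpow hS.le ha.le, Real.rpow_neg ha.le, div_eq_inv_mul]

lemma div_four_le_and_le_four_mul_of_sqrt_bounds {x S : ℝ} (hx : 0 ≤ x) (hS : 0 ≤ S)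
    (hlow : 1 / 2 * √S ≤ √x) (hup : √x ≤ 2 * √S) : S / 4 ≤ x ∧ x ≤ 4 * S := by
  constructor
  · nlinarith [Real.sq_sqrt hx, Real.sq_sqrt hS, Real.sqrt_nonneg S]
  · nlinarith [Real.sq_sqrt hx, Real.sq_sqrt hS, Real.sqrt_nonneg x]

section IteratedAverage

variable {α β : Type*} [MeasurableSpace α] [MeasurableSpace β] {μ : Measure α} {ν : Measure β}
  {s : Set α} {t : Set β} {f : α → β → ℝ}

lemma iteratedAverage_nonneg (hs : MeasurableSet s) (ht : MeasurableSet t)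
    (hf : ∀ u ∈ s, ∀ v ∈ t, 0 ≤ f u v) :
    0 ≤ 1 / ((μ s).toReal * (ν t).toReal) * ∫ u in s, ∫ v in t, f u v ∂ν ∂μ :=
  mul_nonneg (by positivity)
    (setIntegral_nonneg hs fun u hu => setIntegral_nonneg ht fun v hv => hf u hu v hv)

lemma iteratedAverage_le {M : ℝ} (hs : 0 < (μ s).toReal) (ht : 0 < (ν t).toReal)
    (hf : ∀ u ∈ s, ∀ v ∈ t, ‖f u v‖ ≤ M) :
    1 / ((μ s).toReal * (ν t).toReal) * ∫ u in s, ∫ v in t, f u v ∂ν ∂μ ≤ M := by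
  have hinner : ∀ u ∈ s, ‖∫ v in t, f u v ∂ν‖ ≤ M * (ν t).toReal := fun u hu =>
    norm_setIntegral_le_of_norm_le_const (ENNReal.toReal_pos_iff.1 ht).2 (hf u hu)
  have houter := norm_setIntegral_le_of_norm_le_const (ENNReal.toReal_pos_iff.1 hs).2 hinner
  rw [one_div_mul_eq_div, div_le_iff₀ (by positivity)]
  calc ∫ u in s, ∫ v in t, f u v ∂ν ∂μ ≤ M * (ν t).toReal * (μ s).toReal :=
        (le_abs_self _).trans houter
    _ = M * ((μ s).toReal * (ν t).toReal) := by ring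

variable {w : α → β → ℝ} {a S : ℝ}

lemma iteratedAverage_rpow_le (e : ℝ) (hs : 0 < (μ s).toReal) (ht : 0 < (ν t).toReal)
    (ha : 0 < a) (hS : 0 < S) (hw : ∀ u ∈ s, ∀ v ∈ t, S / a ≤ w u v ∧ w u v ≤ a * S) :
    1 / ((μ s).toReal * (ν t).toReal) * ∫ u in s, ∫ v in t, w u v ^ e ∂ν ∂μ ≤ a ^ |e| * S ^ e :=
  iteratedAverage_le hs ht fun u hu v hv => by
    have hw0 : 0 ≤ w u v := (div_pos hS ha).le.trans (hw u hu v hv).1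
    rw [Real.norm_of_nonneg (Real.rpow_nonneg hw0 e)]
    exact rpow_le_rpow_abs_mul_rpow e ha hS (hw u hu v hv).1 (hw u hu v hv).2

lemma iteratedAverage_rpow_rpow_le (e θ : ℝ) (hθ : 0 ≤ θ)
    (hsm : MeasurableSet s) (htm : MeasurableSet t) (hs : 0 < (μ s).toReal)
    (ht : 0 < (ν t).toReal) (ha : 0 < a) (hS : 0 < S)
    (hw : ∀ u ∈ s, ∀ v ∈ t, S / a ≤ w u v ∧ w u v ≤ a * S) :
    (1 / ((μ s).toReal * (ν t).toReal) * ∫ u in s, ∫ v in t, w u v ^ e ∂ν ∂μ) ^ θ ≤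
      (a ^ |e|) ^ θ * S ^ (e * θ) := by
  have hw0 : ∀ u ∈ s, ∀ v ∈ t, 0 ≤ w u v ^ e := fun u hu v hv =>
    Real.rpow_nonneg ((div_pos hS ha).le.trans (hw u hu v hv).1) e
  calc _ ≤ (a ^ |e| * S ^ e) ^ θ :=
        Real.rpow_le_rpow (iteratedAverage_nonneg hsm htm hw0)
          (iteratedAverage_rpow_le e hs ht ha hS hw) hθ
    _ = (a ^ |e|) ^ θ * S ^ (e * θ) := by
        rw [Real.mul_rpow (by positivity) (by positivity), Real.rpow_mul hS.le]

lemma iteratedAverage_rpow_mul_iteratedAverage_rpow_le (e₁ θ₁ e₂ θ₂ : ℝ) (hθ₁ : 0 ≤ θ₁)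
    (hθ₂ : 0 ≤ θ₂) (hsm : MeasurableSet s) (htm : MeasurableSet t) (hs : 0 < (μ s).toReal)
    (ht : 0 < (ν t).toReal) (ha : 0 < a) (hS : 0 < S)
    (hw : ∀ u ∈ s, ∀ v ∈ t, S / a ≤ w u v ∧ w u v ≤ a * S) :
    (1 / ((μ s).toReal * (ν t).toReal) * ∫ u in s, ∫ v in t, w u v ^ e₁ ∂ν ∂μ) ^ θ₁ *
        (1 / ((μ s).toReal * (ν t).toReal) * ∫ u in s, ∫ v in t, w u v ^ e₂ ∂ν ∂μ) ^ θ₂ ≤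
      (a ^ |e₁|) ^ θ₁ * (a ^ |e₂|) ^ θ₂ * S ^ (e₁ * θ₁ + e₂ * θ₂) := by
  have hw0 : ∀ u ∈ s, ∀ v ∈ t, 0 ≤ w u v ^ e₂ := fun u hu v hv =>
    Real.rpow_nonneg ((div_pos hS ha).le.trans (hw u hu v hv).1) e₂
  rw [Real.rpow_add hS, mul_mul_mul_comm]
  exact mul_le_mul (iteratedAverage_rpow_rpow_le e₁ θ₁ hθ₁ hsm htm hs ht ha hS hw)
    (iteratedAverage_rpow_rpow_le e₂ θ₂ hθ₂ hsm htm hs ht ha hS hw)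
    (Real.rpow_nonneg (iteratedAverage_nonneg hsm htm hw0) θ₂) (by positivity)

end IteratedAverage

theorem stmt15 (n : ℕ) (hn : 1 ≤ n) (p q γ δ r ζ : ℝ) (hp : 1 < p) (hpq : p < q)
    (hgd : 0 < γ + δ) (hr : 1 < r)
    (hζ : ζ = (n : ℝ) / p - (n : ℝ) / q + (γ + δ) / 2) :
    ∃ C : ℝ, 0 < C ∧
      ∀ (u₀ v₀ : EuclideanSpace ℝ (Fin n)) (lam : ℝ),
        3 < Real.sqrt (‖u₀‖ ^ 2 + ‖v₀‖ ^ 2) → 0 < lam → lam ≤ 1 →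
        (∀ u ∈ cube n u₀ lam, ∀ v ∈ cube n v₀ 1,
          (1 / 2) * Real.sqrt (‖u₀‖ ^ 2 + ‖v₀‖ ^ 2) ≤ Real.sqrt (‖u‖ ^ 2 + ‖v‖ ^ 2) ∧
          Real.sqrt (‖u‖ ^ 2 + ‖v‖ ^ 2) ≤ 2 * Real.sqrt (‖u₀‖ ^ 2 + ‖v₀‖ ^ 2)) →
        (volume (cube n u₀ lam)).toReal ^ (ζ / (n : ℝ) - 1 / p + 1 / q) *
          (volume (cube n v₀ 1)).toReal ^ (ζ / (n : ℝ) - 1 / p + 1 / q) *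
          ((1 / ((volume (cube n u₀ lam)).toReal * (volume (cube n v₀ 1)).toReal)) *
            ∫ u in cube n u₀ lam, ∫ v in cube n v₀ 1,
              (‖u‖ ^ 2 + ‖v‖ ^ 2) ^ (-(γ * q * r) / 2)) ^ (1 / (q * r)) *
          ((1 / ((volume (cube n u₀ lam)).toReal * (volume (cube n v₀ 1)).toReal)) *
            ∫ u in cube n u₀ lam, ∫ v in cube n v₀ 1,
              (‖u‖ ^ 2 + ‖v‖ ^ 2) ^ (-(δ * p * r) / (2 * (p - 1)))) ^ ((p - 1) / (p * r))
        ≤ C * lam ^ ((γ + δ) / (2 * (n : ℝ))) := by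
  have hn0 : n ≠ 0 := by omega
  have hq : 0 < q := by linarith
  have hr0 : 0 < r := by linarith
  have hp1 : 0 < p - 1 := by linarith
  have hε : ζ / n - 1 / p + 1 / q = (γ + δ) / 2 / n := by
    rw [hζ]
    field_simp
    ring
  set e₁ := -(γ * q * r) / 2
  set e₂ := -(δ * p * r) / (2 * (p - 1))
  have hexp : e₁ * (1 / (q * r)) + e₂ * ((p - 1) / (p * r)) = -(γ + δ) / 2 := by
    simp only [e₁, e₂]
    field_simp
    ring
  refine ⟨(4 ^ |e₁|) ^ (1 / (q * r)) * (4 ^ |e₂|) ^ ((p - 1) / (p * r)) * 9 ^ (-(γ + δ) / 2),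
    by positivity, fun u₀ v₀ lam hfar hlam0 hlam1 hbound => ?_⟩
  set S := ‖u₀‖ ^ 2 + ‖v₀‖ ^ 2
  have hS : 9 ≤ S := by nlinarith [(Real.lt_sqrt (by norm_num : (0 : ℝ) ≤ 3)).1 hfar]
  have hweight : ∀ u ∈ cube n u₀ lam, ∀ v ∈ cube n v₀ 1,
      S / 4 ≤ ‖u‖ ^ 2 + ‖v‖ ^ 2 ∧ ‖u‖ ^ 2 + ‖v‖ ^ 2 ≤ 4 * S := fun u hu v hv =>
    div_four_le_and_le_four_mul_of_sqrt_bounds (by positivity) (by positivity)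
      (hbound u hu v hv).1 (hbound u hu v hv).2
  have hQ₁ : 0 < (volume (cube n u₀ lam)).toReal := by
    rw [volume_cube_toReal n u₀ hlam0.le]; positivity
  have hQ₂ : 0 < (volume (cube n v₀ 1)).toReal := by
    rw [volume_cube_toReal n v₀ zero_le_one]; positivity
  have hlam : lam ^ ((γ + δ) / 2) ≤ lam ^ ((γ + δ) / (2 * n)) :=
    Real.rpow_le_rpow_of_exponent_ge hlam0 hlam1
      (div_le_div_of_nonneg_left hgd.le two_pos (by norm_cast; omega))
  have hS9 : S ^ (-(γ + δ) / 2) ≤ 9 ^ (-(γ + δ) / 2) :=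
    Real.rpow_le_rpow_of_nonpos (by norm_num) hS (by linarith)
  rw [hε, volume_cube_toReal_rpow_div_natCast hn0 u₀ hlam0.le,
    volume_cube_toReal_rpow_div_natCast hn0 v₀ zero_le_one, Real.one_rpow, mul_one, mul_assoc]
  calc _ ≤ lam ^ ((γ + δ) / 2) * ((4 ^ |e₁|) ^ (1 / (q * r)) * (4 ^ |e₂|) ^ ((p - 1) / (p * r)) *
        S ^ (e₁ * (1 / (q * r)) + e₂ * ((p - 1) / (p * r)))) :=
        mul_le_mul_of_nonneg_left (iteratedAverage_rpow_mul_iteratedAverage_rpow_le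
          (w := fun u v => ‖u‖ ^ 2 + ‖v‖ ^ 2) _ _ _ _ (by positivity) (by positivity)
          (measurableSet_cube n u₀ lam) (measurableSet_cube n v₀ 1) hQ₁ hQ₂ four_pos
          (by positivity) hweight) (by positivity)
    _ ≤ _ := by
      rw [hexp, mul_comm]
      gcongr
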